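/- Let φ_A, ψ_A ∈ ℂ[λ] be nonzero polynomials with φ_A ≠ ψ_A, let p ∈ ℂ[λ] be nonzero, and let g(∂,λ) ∈ ℂ[∂,λ] be a nonzero polynomial satisfying g(∂+λ, μ)·φ_A(λ) − g(∂,μ)·ψ_A(λ) = p(λ)·g(∂, λ+μ) for all ∂, λ, μ ∈ ℂ. Then p = φ_A − ψ_A, and either g is a nonzero constant, or there exist r ∈ ℂ with r ≠ 0 and r ≠ 1, k₁ ∈ ℂ with k₁ ≠ 0, and k₂ ∈ ℂ such that p(λ) = r·φ_A(λ) and g(∂,λ) = k₁·(∂ + λ/r) + k₂. -/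
import Mathlib


/-- Evaluation of a bivariate polynomial g(∂,λ) at a pair of complex numbers. -/
noncomputable def ev2 (g : MvPolynomial (Fin 2) ℂ) (x y : ℂ) : ℂ :=
  MvPolynomial.eval ![x, y] g

open Polynomial

lemma slice_eval (Q : Polynomial (Polynomial ℂ)) (x y : ℂ) :
    (Q.map (Polynomial.evalRingHom y)).eval x = (Q.eval (Polynomial.C x)).eval y := by
  induction Q using Polynomial.induction_on' with
  | add p q hp hq => simp [hp, hq]
  | monomial n a => simp [Polynomial.map_monomial, Polynomial.eval_monomial, mul_comm]

lemma shift_invariant {f : Polynomial ℂ} {t : ℂ} (ht : t ≠ 0)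
    (hsh : Polynomial.taylor t f = f) : f = Polynomial.C (f.eval 0) := by
  have he : ∀ x : ℂ, f.eval (x + t) = f.eval x := by
    intro x
    conv_rhs => rw [← hsh]
    rw [Polynomial.taylor_eval]
  have hn : ∀ n : ℕ, f.eval ((n : ℂ) * t) = f.eval 0 := by
    intro n
    induction n with
    | zero => simp
    | succ k ih =>
      have := he ((k : ℂ) * t)
      push_cast
      rw [add_mul, one_mul, this, ih]
  have hinf : {x : ℂ | (f - Polynomial.C (f.eval 0)).IsRoot x}.Infinite := by
    apply Set.infinite_of_injective_forall_mem (f := fun n : ℕ => (n : ℂ) * t)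
    · intro a b hab
      have : (a : ℂ) = b := mul_right_cancel₀ ht hab
      exact_mod_cast this
    · intro n
      simp [Polynomial.IsRoot, hn n]
  have h0 := Polynomial.eq_zero_of_infinite_isRoot _ hinf
  exact sub_eq_zero.mp h0

lemma taylor_coeff_top {f : Polynomial ℂ} {M : ℕ} (hf : f.natDegree ≤ M) (l : ℂ) :
    (Polynomial.taylor l f).coeff M = f.coeff M := by
  rw [Polynomial.taylor_coeff]
  have hh : Polynomial.hasseDeriv M f = Polynomial.C (f.coeff M) := by
    ext k
    rw [Polynomial.hasseDeriv_coeff, Polynomial.coeff_C]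
    rcases k with _ | k
    · simp
    · have hz : f.coeff (k + 1 + M) = 0 :=
        Polynomial.coeff_eq_zero_of_natDegree_lt (by omega)
      simp [hz]
  simp [hh]

lemma taylor_coeff_second {f : Polynomial ℂ} {M : ℕ} (hf : f.natDegree ≤ M + 1) (l : ℂ) :
    (Polynomial.taylor l f).coeff M
      = f.coeff M + (M + 1 : ℂ) * l * f.coeff (M + 1) := by
  rw [Polynomial.taylor_coeff]
  have hh : Polynomial.hasseDeriv M f
      = Polynomial.C (f.coeff M) + Polynomial.C ((M + 1 : ℂ) * f.coeff (M + 1)) * Polynomial.X := by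
    ext k
    rw [Polynomial.hasseDeriv_coeff]
    rw [Polynomial.coeff_add, Polynomial.coeff_C, Polynomial.coeff_C_mul, Polynomial.coeff_X]
    rcases k with _ | k
    · simp
    rcases k with _ | k
    · have hch : (1 + M).choose M = M + 1 := by
        rw [add_comm, Nat.choose_succ_self_right]
      norm_num
      rw [show 1 + M = M + 1 by omega] at hch ⊢
      rw [hch]
      push_cast
      ring
    · have hz : f.coeff (k + 2 + M) = 0 :=
        Polynomial.coeff_eq_zero_of_natDegree_lt (by omega)
      simp [hz]
  rw [hh]
  simp
  ring

lemma rep (g : MvPolynomial (Fin 2) ℂ) :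
    ∃ Q : Polynomial (Polynomial ℂ),
      ∀ x y : ℂ, ev2 g x y = (Q.map (Polynomial.evalRingHom y)).eval x := by
  induction g using MvPolynomial.induction_on with
  | C a =>
    exact ⟨Polynomial.C (Polynomial.C a), fun x y => by simp [ev2]⟩
  | add f g hf hg =>
    obtain ⟨Qf, hQf⟩ := hf
    obtain ⟨Qg, hQg⟩ := hg
    refine ⟨Qf + Qg, fun x y => ?_⟩
    have : ev2 (f + g) x y = ev2 f x y + ev2 g x y := by simp [ev2]
    rw [this, hQf, hQg, Polynomial.map_add, Polynomial.eval_add]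
  | mul_X f i hf =>
    obtain ⟨Qf, hQf⟩ := hf
    fin_cases i
    · refine ⟨Qf * Polynomial.X, fun x y => ?_⟩
      have : ev2 (f * MvPolynomial.X ((0 : Fin 2))) x y = ev2 f x y * x := by simp [ev2]
      rw [show ((⟨0, by omega⟩ : Fin 2)) = (0 : Fin 2) from rfl, this, hQf]
      simp
    · refine ⟨Qf * Polynomial.C Polynomial.X, fun x y => ?_⟩
      have : ev2 (f * MvPolynomial.X ((1 : Fin 2))) x y = ev2 f x y * y := by simp [ev2]
      rw [show ((⟨1, by omega⟩ : Fin 2)) = (1 : Fin 2) from rfl, this, hQf]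
      simp

/-- if φ_A, ψ_A are nonzero with φ_A ≠ ψ_A, p ≠ 0, g ≠ 0 and
g(∂+λ,μ)φ_A(λ) − g(∂,μ)ψ_A(λ) = p(λ)g(∂,λ+μ), then p = φ_A − ψ_A and either g is a
nonzero constant, or p = r·φ_A with r ≠ 0, 1 and g(∂,λ) = k₁(∂ + λ/r) + k₂ with k₁ ≠ 0. -/
theorem stmt_14 (phiA psiA : Polynomial ℂ) (hphiA : phiA ≠ 0) (hpsiA : psiA ≠ 0)
    (hne : phiA ≠ psiA) (p : Polynomial ℂ) (hp : p ≠ 0)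
    (g : MvPolynomial (Fin 2) ℂ) (hg : g ≠ 0)
    (h : ∀ x l m : ℂ,
      ev2 g (x + l) m * phiA.eval l - ev2 g x m * psiA.eval l
        = p.eval l * ev2 g x (l + m)) :
    p = phiA - psiA ∧
      ((∃ k : ℂ, k ≠ 0 ∧ g = MvPolynomial.C k) ∨
        (∃ r k₁ k₂ : ℂ, r ≠ 0 ∧ r ≠ 1 ∧ k₁ ≠ 0 ∧
          p = Polynomial.C r * phiA ∧
          ∀ x l : ℂ, ev2 g x l = k₁ * (x + l / r) + k₂)) := by
  obtain ⟨Q, hQ⟩ := rep g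
  have hgE : ∃ x y : ℂ, ev2 g x y ≠ 0 := by
    by_contra hc
    push_neg at hc
    apply hg
    apply MvPolynomial.funext
    intro v
    have hv : v = ![v 0, v 1] := by funext i; fin_cases i <;> rfl
    rw [hv]
    simpa [ev2] using hc (v 0) (v 1)
  have hQne : Q ≠ 0 := by
    rintro rfl
    obtain ⟨x, y, hxy⟩ := hgE
    exact hxy (by rw [hQ]; simp)
  have hcMne : Q.coeff Q.natDegree ≠ 0 := by
    rw [← Polynomial.leadingCoeff]
    exact Polynomial.leadingCoeff_ne_zero.mpr hQne
  have hdegBm : ∀ m : ℂ, (Q.map (Polynomial.evalRingHom m)).natDegree ≤ Q.natDegree :=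
    fun m => Polynomial.natDegree_map_le
  have hcoeffBm : ∀ (i : ℕ) (m : ℂ),
      (Q.map (Polynomial.evalRingHom m)).coeff i = (Q.coeff i).eval m :=
    fun i m => Polynomial.coeff_map _ _
  have hpoly : ∀ l m : ℂ,
      Polynomial.taylor l (Q.map (Polynomial.evalRingHom m)) * Polynomial.C (phiA.eval l)
        = Q.map (Polynomial.evalRingHom m) * Polynomial.C (psiA.eval l)
          + Polynomial.C (p.eval l) * Q.map (Polynomial.evalRingHom (l + m)) := by
    intro l m
    apply Polynomial.funext
    intro x
    have h1 := h x l m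
    rw [hQ, hQ, hQ] at h1
    simp only [Polynomial.eval_add, Polynomial.eval_mul, Polynomial.eval_C,
      Polynomial.taylor_eval]
    linear_combination h1
  have hK : ∀ l m : ℂ, (Q.coeff Q.natDegree).eval m * phiA.eval l
      = (Q.coeff Q.natDegree).eval m * psiA.eval l
        + p.eval l * (Q.coeff Q.natDegree).eval (l + m) := by
    intro l m
    have hco := congrArg (fun q => Polynomial.coeff q Q.natDegree) (hpoly l m)
    simp only [Polynomial.coeff_add, Polynomial.coeff_mul_C, Polynomial.coeff_C_mul] at hco
    rw [taylor_coeff_top (hdegBm m) l, hcoeffBm, hcoeffBm] at hco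
    exact hco
  have hpphi : p = phiA - psiA := by
    apply Polynomial.funext
    intro l
    have hK2 : (Q.coeff Q.natDegree) * Polynomial.C (phiA.eval l)
        = (Q.coeff Q.natDegree) * Polynomial.C (psiA.eval l)
          + Polynomial.C (p.eval l) * Polynomial.taylor l (Q.coeff Q.natDegree) := by
      apply Polynomial.funext
      intro m
      simp only [Polynomial.eval_add, Polynomial.eval_mul, Polynomial.eval_C,
        Polynomial.taylor_eval]
      have := hK l m
      rw [add_comm m l]
      linear_combination this
    have hco := congrArg (fun q => Polynomial.coeff q (Q.coeff Q.natDegree).natDegree) hK2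
    simp only [Polynomial.coeff_add, Polynomial.coeff_mul_C, Polynomial.coeff_C_mul] at hco
    rw [taylor_coeff_top le_rfl l] at hco
    have hlc : (Q.coeff Q.natDegree).coeff (Q.coeff Q.natDegree).natDegree ≠ 0 := by
      rw [← Polynomial.leadingCoeff]
      exact Polynomial.leadingCoeff_ne_zero.mpr hcMne
    have heq : phiA.eval l = psiA.eval l + p.eval l := by
      apply mul_left_cancel₀ hlc
      linear_combination hco
    rw [Polynomial.eval_sub]
    linear_combination -heq
  have hpe : ∀ l : ℂ, p.eval l = phiA.eval l - psiA.eval l := by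
    intro l; rw [hpphi, Polynomial.eval_sub]
  have hcMtaylor : ∀ m : ℂ, Polynomial.taylor m (Q.coeff Q.natDegree)
      = Polynomial.C ((Q.coeff Q.natDegree).eval m) := by
    intro m
    have hzero : p * (Polynomial.taylor m (Q.coeff Q.natDegree)
        - Polynomial.C ((Q.coeff Q.natDegree).eval m)) = 0 := by
      apply Polynomial.funext
      intro l
      simp only [Polynomial.eval_mul, Polynomial.eval_sub, Polynomial.eval_C,
        Polynomial.taylor_eval, Polynomial.eval_zero]
      have h1 := hK l m
      have h2 := hpe l
      linear_combination -h1 - (Q.coeff Q.natDegree).eval m * h2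
    rcases mul_eq_zero.mp hzero with h2 | h2
    · exact absurd h2 hp
    · linear_combination h2
  have hcMC : Q.coeff Q.natDegree = Polynomial.C ((Q.coeff Q.natDegree).eval 0) := by
    have := hcMtaylor 0
    rwa [Polynomial.taylor_zero] at this
  have hdne : (Q.coeff Q.natDegree).eval 0 ≠ 0 := by
    intro h0
    exact hcMne (by rw [hcMC, h0, map_zero])
  rcases Nat.eq_zero_or_pos Q.natDegree with hM0 | hMpos
  · -- constant case
    refine ⟨hpphi, Or.inl ⟨(Q.coeff Q.natDegree).eval 0, hdne, ?_⟩⟩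
    have hQC : Q = Polynomial.C (Polynomial.C ((Q.coeff Q.natDegree).eval 0)) := by
      conv_lhs => rw [Polynomial.eq_C_of_natDegree_eq_zero hM0]
      rw [show Q.coeff 0 = Q.coeff Q.natDegree by rw [hM0], hcMC]
      simp
    apply MvPolynomial.funext
    intro v
    have hv : v = ![v 0, v 1] := by funext i; fin_cases i <;> rfl
    rw [hv]
    have h2 : ev2 g (v 0) (v 1) = (Q.coeff Q.natDegree).eval 0 := by
      rw [hQ, hQC]; simp
    calc MvPolynomial.eval ![v 0, v 1] g = ev2 g (v 0) (v 1) := rfl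
      _ = (Q.coeff Q.natDegree).eval 0 := h2
      _ = MvPolynomial.eval ![v 0, v 1] (MvPolynomial.C ((Q.coeff Q.natDegree).eval 0)) := by simp
  · -- nonconstant case
    obtain ⟨M', hM'⟩ : ∃ M', Q.natDegree = M' + 1 := ⟨Q.natDegree - 1, by omega⟩
    have hL : ∀ l m : ℂ, ((M' : ℂ) + 1) * l * ((Q.coeff Q.natDegree).eval 0) * phiA.eval l
        = p.eval l * ((Q.coeff M').eval (l + m) - (Q.coeff M').eval m) := by
      intro l m
      have hco := congrArg (fun q => Polynomial.coeff q M') (hpoly l m)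
      simp only [Polynomial.coeff_add, Polynomial.coeff_mul_C, Polynomial.coeff_C_mul] at hco
      rw [taylor_coeff_second (f := Q.map (Polynomial.evalRingHom m)) (M := M')
        (by rw [← hM']; exact hdegBm m) l] at hco
      rw [hcoeffBm, hcoeffBm, hcoeffBm] at hco
      have hcMm : (Q.coeff (M' + 1)).eval m = (Q.coeff Q.natDegree).eval 0 := by
        rw [← hM', hcMC]
        simp
      rw [hcMm] at hco
      have h2 := hpe l
      linear_combination hco + (Q.coeff M').eval m * h2
    have hE1 : ∀ m : ℂ, Polynomial.C (((M' : ℂ) + 1) * ((Q.coeff Q.natDegree).eval 0))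
        * Polynomial.X * phiA
        = p * (Polynomial.taylor m (Q.coeff M') - Polynomial.C ((Q.coeff M').eval m)) := by
      intro m
      apply Polynomial.funext
      intro l
      simp only [Polynomial.eval_mul, Polynomial.eval_sub, Polynomial.eval_C,
        Polynomial.eval_X, Polynomial.taylor_eval]
      linear_combination hL l m
    have htay : ∀ m : ℂ, Polynomial.taylor m (Q.coeff M')
        = Q.coeff M' + (Polynomial.C ((Q.coeff M').eval m) - Polynomial.C ((Q.coeff M').eval 0)) := by
      intro m
      have h1 := hE1 m
      have h0 := hE1 0
      rw [Polynomial.taylor_zero] at h0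
      have hz : p * ((Polynomial.taylor m (Q.coeff M') - Polynomial.C ((Q.coeff M').eval m))
          - (Q.coeff M' - Polynomial.C ((Q.coeff M').eval 0))) = 0 := by
        rw [mul_sub, ← h1, ← h0]
        ring
      rcases mul_eq_zero.mp hz with h2 | h2
      · exact absurd h2 hp
      · linear_combination h2
    have hderiv : ∀ m : ℂ, Polynomial.taylor m (Polynomial.derivative (Q.coeff M'))
        = Polynomial.derivative (Q.coeff M') := by
      intro m
      have hd := congrArg Polynomial.derivative (htay m)
      rw [Polynomial.taylor_apply, Polynomial.derivative_comp] at hd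
      have e1 : Polynomial.derivative (Polynomial.X + Polynomial.C m) = (1 : Polynomial ℂ) := by
        simp
      have e2 : Polynomial.derivative (Q.coeff M'
          + (Polynomial.C ((Q.coeff M').eval m) - Polynomial.C ((Q.coeff M').eval 0)))
          = Polynomial.derivative (Q.coeff M') := by
        simp
      rw [e1, one_mul, e2] at hd
      rw [Polynomial.taylor_apply]
      exact hd
    have hds : Polynomial.derivative (Q.coeff M')
        = Polynomial.C ((Polynomial.derivative (Q.coeff M')).eval 0) :=
      shift_invariant one_ne_zero (hderiv 1)
    have hclin : Q.coeff M' = Polynomial.C ((Polynomial.derivative (Q.coeff M')).eval 0)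
        * Polynomial.X + Polynomial.C ((Q.coeff M').coeff 0) := by
      have hD0 : Polynomial.derivative (Q.coeff M'
          - Polynomial.C ((Polynomial.derivative (Q.coeff M')).eval 0) * Polynomial.X) = 0 := by
        have e3 : Polynomial.derivative (Polynomial.C ((Polynomial.derivative (Q.coeff M')).eval 0)
            * Polynomial.X) = Polynomial.C ((Polynomial.derivative (Q.coeff M')).eval 0) := by
          simp
        rw [Polynomial.derivative_sub, e3, hds]
        simp
      have h2 := Polynomial.eq_C_of_natDegree_eq_zero
        (Polynomial.natDegree_eq_zero_of_derivative_eq_zero hD0)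
      have h3 : (Q.coeff M' - Polynomial.C ((Polynomial.derivative (Q.coeff M')).eval 0)
          * Polynomial.X).coeff 0 = (Q.coeff M').coeff 0 := by simp
      rw [h3] at h2
      linear_combination h2
    set s := (Polynomial.derivative (Q.coeff M')).eval 0 with hsdef
    set d := (Q.coeff Q.natDegree).eval 0 with hddef
    have hlin : ∀ l m : ℂ, (Q.coeff M').eval (l + m) - (Q.coeff M').eval m = s * l := by
      intro l m
      rw [hclin]
      simp only [Polynomial.eval_add, Polynomial.eval_mul, Polynomial.eval_C, Polynomial.eval_X]
      ring
    have hXfac : Polynomial.X * (Polynomial.C (((M' : ℂ) + 1) * d) * phiA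
        - Polynomial.C s * p) = 0 := by
      apply Polynomial.funext
      intro l
      simp only [Polynomial.eval_mul, Polynomial.eval_sub, Polynomial.eval_C,
        Polynomial.eval_X, Polynomial.eval_zero]
      have h1 := hL l 0
      rw [hlin l 0] at h1
      linear_combination h1
    have hfac : Polynomial.C (((M' : ℂ) + 1) * d) * phiA = Polynomial.C s * p := by
      rcases mul_eq_zero.mp hXfac with h2 | h2
      · exact absurd h2 Polynomial.X_ne_zero
      · linear_combination h2
    have hMd : ((M' : ℂ) + 1) * d ≠ 0 :=
      mul_ne_zero (Nat.cast_add_one_ne_zero M') hdne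
    have hsne : s ≠ 0 := by
      intro h0
      rw [h0, map_zero, zero_mul] at hfac
      rcases mul_eq_zero.mp hfac with h2 | h2
      · exact hMd (Polynomial.C_eq_zero.mp h2)
      · exact hphiA h2
    set r := (((M' : ℂ) + 1) * d) / s with hrdef
    have hsr : s * r = ((M' : ℂ) + 1) * d := by
      rw [hrdef]
      field_simp
    have hpr : p = Polynomial.C r * phiA := by
      have hCs : (Polynomial.C s : Polynomial ℂ) ≠ 0 := by
        simpa using hsne
      apply mul_left_cancel₀ hCs
      rw [← hfac, ← mul_assoc, ← Polynomial.C_mul, hsr]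
    have hr0 : r ≠ 0 := div_ne_zero hMd hsne
    have hr1 : r ≠ 1 := by
      intro h1
      apply hpsiA
      rw [h1, Polynomial.C_1, one_mul] at hpr
      have : psiA = phiA - p := by rw [hpphi]; ring
      rw [this, hpr]
      ring
    have hclean : ∀ l : ℂ, phiA.eval l ≠ 0 → ∀ x m : ℂ,
        ev2 g (x + l) m = (1 - r) * ev2 g x m + r * ev2 g x (l + m) := by
      intro l hl x m
      have h1 := h x l m
      have hpl : p.eval l = r * phiA.eval l := by
        rw [hpr]; simp
      have hpsil : psiA.eval l = (1 - r) * phiA.eval l := by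
        have h2 := hpe l
        linear_combination h2 - hpl
      apply mul_left_cancel₀ hl
      linear_combination h1 + ev2 g x m * hpsil + ev2 g x (l + m) * hpl
    have hSinf : {l : ℂ | phiA.eval l ≠ 0}.Infinite := by
      have hfin := Polynomial.finite_setOf_isRoot hphiA
      have hcompl : {l : ℂ | phiA.eval l ≠ 0} = {x : ℂ | phiA.IsRoot x}ᶜ := by
        ext t
        simp [Polynomial.IsRoot]
      rw [hcompl]
      exact hfin.infinite_compl
    have hF : ∀ x l : ℂ, r * ev2 g x l
        = (Q.map (Polynomial.evalRingHom 0)).eval (x + l)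
          - (1 - r) * (Q.map (Polynomial.evalRingHom 0)).eval x := by
      intro x l
      have hagree : Polynomial.C r * (Q.eval (Polynomial.C x))
          = Polynomial.taylor x (Q.map (Polynomial.evalRingHom 0))
            - Polynomial.C ((1 - r) * (Q.map (Polynomial.evalRingHom 0)).eval x) := by
        apply Polynomial.eq_of_infinite_eval_eq
        apply hSinf.mono
        intro t ht
        simp only [Set.mem_setOf_eq, Polynomial.eval_mul, Polynomial.eval_C,
          Polynomial.eval_sub, Polynomial.taylor_eval]
        have hc := hclean t ht x 0
        rw [add_zero] at hc
        have hs1 : (Q.eval (Polynomial.C x)).eval t = ev2 g x t := by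
          rw [hQ]
          exact (slice_eval Q x t).symm
        have hs2 : (Q.map (Polynomial.evalRingHom 0)).eval (t + x) = ev2 g (x + t) 0 := by
          rw [hQ, add_comm]
        have hs3 : (Q.map (Polynomial.evalRingHom 0)).eval x = ev2 g x 0 := (hQ x 0).symm
        rw [hs1, hs2, hs3]
        linear_combination -hc
      have hev := congrArg (fun q => Polynomial.eval l q) hagree
      simp only [Polynomial.eval_mul, Polynomial.eval_C, Polynomial.eval_sub,
        Polynomial.taylor_eval] at hev
      have hs1 : (Q.eval (Polynomial.C x)).eval l = ev2 g x l := by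
        rw [hQ]
        exact (slice_eval Q x l).symm
      rw [hs1, add_comm l x] at hev
      exact hev
    have haddB : ∀ m : ℂ, Polynomial.taylor m (Q.map (Polynomial.evalRingHom 0))
        = Q.map (Polynomial.evalRingHom 0)
          + Polynomial.C ((Q.map (Polynomial.evalRingHom 0)).eval m
            - (Q.map (Polynomial.evalRingHom 0)).eval 0) := by
      intro m
      apply Polynomial.eq_of_infinite_eval_eq
      apply hSinf.mono
      intro t ht
      simp only [Set.mem_setOf_eq, Polynomial.eval_add, Polynomial.eval_C,
        Polynomial.taylor_eval]
      have hc := hclean t ht 0 m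
      rw [zero_add] at hc
      have e1 := hF t m
      have e2 := hF 0 m
      have e3 := hF 0 (t + m)
      rw [zero_add] at e2 e3
      have hr1' : (1 : ℂ) - r ≠ 0 := sub_ne_zero.mpr (Ne.symm hr1)
      apply mul_left_cancel₀ hr1'
      linear_combination r * hc - e1 + (1 - r) * e2 + r * e3
    have hBd : ∀ m : ℂ, Polynomial.taylor m (Polynomial.derivative (Q.map (Polynomial.evalRingHom 0)))
        = Polynomial.derivative (Q.map (Polynomial.evalRingHom 0)) := by
      intro m
      have hd := congrArg Polynomial.derivative (haddB m)
      rw [Polynomial.taylor_apply, Polynomial.derivative_comp] at hd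
      have e1 : Polynomial.derivative (Polynomial.X + Polynomial.C m) = (1 : Polynomial ℂ) := by
        simp
      have e2 : Polynomial.derivative (Q.map (Polynomial.evalRingHom 0)
          + Polynomial.C ((Q.map (Polynomial.evalRingHom 0)).eval m
            - (Q.map (Polynomial.evalRingHom 0)).eval 0))
          = Polynomial.derivative (Q.map (Polynomial.evalRingHom 0)) := by
        simp
      rw [e1, one_mul, e2] at hd
      rw [Polynomial.taylor_apply]
      exact hd
    have hdB : Polynomial.derivative (Q.map (Polynomial.evalRingHom 0))
        = Polynomial.C ((Polynomial.derivative (Q.map (Polynomial.evalRingHom 0))).eval 0) :=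
      shift_invariant one_ne_zero (hBd 1)
    set k₁ := (Polynomial.derivative (Q.map (Polynomial.evalRingHom 0))).eval 0 with hk1def
    set k₂ := (Q.map (Polynomial.evalRingHom 0)).coeff 0 with hk2def
    have hBlin : Q.map (Polynomial.evalRingHom 0)
        = Polynomial.C k₁ * Polynomial.X + Polynomial.C k₂ := by
      have e3 : Polynomial.derivative (Polynomial.C k₁ * Polynomial.X)
          = (Polynomial.C k₁ : Polynomial ℂ) := by
        simp
      have hD0 : Polynomial.derivative (Q.map (Polynomial.evalRingHom 0)
          - Polynomial.C k₁ * Polynomial.X) = 0 := by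
        rw [Polynomial.derivative_sub, e3, ← hk1def] at *
        rw [hdB, ← hk1def, sub_self]
      have h2 := Polynomial.eq_C_of_natDegree_eq_zero
        (Polynomial.natDegree_eq_zero_of_derivative_eq_zero hD0)
      have h3 : (Q.map (Polynomial.evalRingHom 0) - Polynomial.C k₁ * Polynomial.X).coeff 0
          = k₂ := by
        rw [hk2def]
        simp
      rw [h3] at h2
      linear_combination h2
    have hEform : ∀ x l : ℂ, ev2 g x l = k₁ * x + k₁ / r * l + k₂ := by
      intro x l
      have e := hF x l
      rw [hBlin] at e
      simp only [Polynomial.eval_add, Polynomial.eval_mul, Polynomial.eval_C,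
        Polynomial.eval_X] at e
      have hk1r : r * (k₁ / r) = k₁ := mul_div_cancel₀ k₁ hr0
      apply mul_left_cancel₀ hr0
      linear_combination e - l * hk1r
    have hcoD : d = (if M' + 1 = 1 then k₁ else 0) := by
      have hBm0 : Q.map (Polynomial.evalRingHom 0)
          = Polynomial.C k₁ * Polynomial.X + Polynomial.C k₂ := hBlin
      have hco1 : (Q.map (Polynomial.evalRingHom 0)).coeff (M' + 1) = d := by
        rw [hcoeffBm, ← hM', hcMC]
        simp
      rw [hBm0] at hco1
      rw [← hco1]
      rw [Polynomial.coeff_add, Polynomial.coeff_C_mul, Polynomial.coeff_X, Polynomial.coeff_C]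
      simp
    have hM'0 : M' = 0 := by
      by_contra hne0
      rw [if_neg (by omega)] at hcoD
      exact hdne hcoD
    have hk1 : k₁ ≠ 0 := by
      rw [hM'0] at hcoD
      rw [if_pos rfl] at hcoD
      rw [← hcoD]
      exact hdne
    refine ⟨hpphi, Or.inr ⟨r, k₁, k₂, hr0, hr1, hk1, hpr, ?_⟩⟩
    intro x l
    rw [hEform x l]
    field_simp
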